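/- arXiv:2409.07583 — 7 statements merged into one kernel-verified Lean document; each statement's English description precedes it below -/
import Mathlib

section
/- Let I ⊆ k[x_1,x_2,x_3] be a monomial ideal and u a monomial with u·x_1 ∈ I and u·x_2 ∈ I. The cycle ū e_1 ∧ e_2 in the Koszul complex of R = S/I (on x_1,x_2,x_3) is a boundary if and only if u ∈ I + x_3·(I : (x_1,x_2)). -/
open MvPolynomial

/-- The Koszul sign `sgn(τ, j) = (-1)^{#{s ∈ τ : s < j}}`. -/
def koszulSgn {n : ℕ} (τ : Finset (Fin n)) (j : Fin n) : ℤ :=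
  (-1) ^ ((τ.filter fun s => s < j).card)

/-- The Koszul differential on chains, represented as functions
`Finset (Fin n) → R` (the value at `σ` is the coefficient of `e_σ`):
`(∂w)(σ) = Σ_{j ∉ σ} sgn(σ ∪ {j}, j) · x_j · w(σ ∪ {j})`. -/
noncomputable def koszulBd {n : ℕ} {R : Type*} [CommRing R] (x : Fin n → R)
    (w : Finset (Fin n) → R) (σ : Finset (Fin n)) : R :=
  ∑ j ∈ σᶜ, koszulSgn (insert j σ) j • (x j * w (insert j σ))

/-- `I` is a monomial ideal: generated by a set of monomials. -/
def IsMonomialIdeal {k : Type*} [Field k] {n : ℕ}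
    (I : Ideal (MvPolynomial (Fin n) k)) : Prop :=
  ∃ G : Set (Fin n →₀ ℕ),
    I = Ideal.span ((fun d => (monomial d (1 : k) : MvPolynomial (Fin n) k)) '' G)

/-- In `S = k[x₁,x₂,x₃]` (variables `X 0, X 1, X 2`), for a monomial `u`
with `u·x₁ ∈ I` and `u·x₂ ∈ I`, the cycle `ū e₁∧e₂` in the Koszul complex of `S/I`
is a boundary iff `u ∈ I + x₃·(I : (x₁,x₂))`. -/
theorem stmt1 {k : Type*} [Field k]
    (I : Ideal (MvPolynomial (Fin 3) k)) (hI : IsMonomialIdeal I)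
    (d : Fin 3 →₀ ℕ) (u : MvPolynomial (Fin 3) k) (hu : u = monomial d (1 : k))
    (h1 : u * X 0 ∈ I) (h2 : u * X 1 ∈ I) :
    (∃ w : Finset (Fin 3) → (MvPolynomial (Fin 3) k ⧸ I),
        koszulBd (fun i => Ideal.Quotient.mk I (X i)) w
          = fun τ => if τ = ({0, 1} : Finset (Fin 3)) then Ideal.Quotient.mk I u else 0)
      ↔ u ∈ I + Ideal.span {(X 2 : MvPolynomial (Fin 3) k)} *
            Submodule.colon I (Ideal.span {(X 0 : MvPolynomial (Fin 3) k), X 1}) := by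
  constructor
  · rintro ⟨w, hw⟩
    obtain ⟨v, hv⟩ := Ideal.Quotient.mk_surjective (w {0,1,2})
    -- τ = {0,1} : x2 * v ≡ u
    have e01 := congrFun hw {0,1}
    have e02 := congrFun hw {0,2}
    have e12 := congrFun hw {1,2}
    rw [koszulBd, show (({0,1} : Finset (Fin 3))ᶜ) = {2} from by decide] at e01
    rw [koszulBd, show (({0,2} : Finset (Fin 3))ᶜ) = {1} from by decide] at e02
    rw [koszulBd, show (({1,2} : Finset (Fin 3))ᶜ) = {0} from by decide] at e12
    simp only [Finset.sum_singleton,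
      show insert (2:Fin 3) ({0,1} : Finset (Fin 3)) = {0,1,2} from by decide,
      show insert (1:Fin 3) ({0,2} : Finset (Fin 3)) = {0,1,2} from by decide,
      show insert (0:Fin 3) ({1,2} : Finset (Fin 3)) = {0,1,2} from by decide,
      show koszulSgn ({0,1,2} : Finset (Fin 3)) 2 = 1 from by decide,
      show koszulSgn ({0,1,2} : Finset (Fin 3)) 1 = -1 from by decide,
      show koszulSgn ({0,1,2} : Finset (Fin 3)) 0 = 1 from by decide,
      one_smul, neg_smul, if_true] at e01 e02 e12
    rw [if_neg (by decide), neg_eq_zero] at e02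
    rw [if_neg (by decide)] at e12
    rw [← hv, ← map_mul] at e01 e02 e12
    have h2v : X 2 * v - u ∈ I := Ideal.Quotient.eq.mp e01
    have h0v : X 0 * v ∈ I := (Ideal.Quotient.eq_zero_iff_mem).mp e12
    have h1v : X 1 * v ∈ I := (Ideal.Quotient.eq_zero_iff_mem).mp e02
    have hvc : v ∈ Submodule.colon I (Ideal.span {(X 0 : MvPolynomial (Fin 3) k), X 1}) := by
      rw [Submodule.mem_colon]
      intro p hp
      refine Submodule.span_induction (fun x hx => ?_) (by simp) (fun x y _ _ hx hy => ?_)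
        (fun a x _ hx => ?_) hp
      · rcases hx with h | h
        · rw [h, smul_eq_mul, mul_comm]; exact h0v
        · rw [Set.mem_singleton_iff] at h; rw [h, smul_eq_mul, mul_comm]; exact h1v
      · rw [smul_add]; exact I.add_mem hx hy
      · rw [smul_comm]; exact I.smul_mem a hx
    rw [show I + _ = I ⊔ _ from rfl, Submodule.mem_sup]
    exact ⟨-(X 2 * v - u), I.neg_mem h2v, X 2 * v,
      Ideal.mem_span_singleton_mul.mpr ⟨v, hvc, rfl⟩, by ring⟩
  · intro hmem
    rw [show I + _ = I ⊔ _ from rfl, Submodule.mem_sup] at hmem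
    obtain ⟨a, ha, b, hb, hab⟩ := hmem
    obtain ⟨c, hc, hbc⟩ := Ideal.mem_span_singleton_mul.mp hb
    refine ⟨fun σ => if σ = ({0,1,2} : Finset (Fin 3)) then Ideal.Quotient.mk I c else 0, ?_⟩
    funext τ
    have h8 : τ = ∅ ∨ τ = {0} ∨ τ = {1} ∨ τ = {2} ∨ τ = {0,1} ∨ τ = {0,2} ∨ τ = {1,2}
        ∨ τ = {0,1,2} := (by decide : ∀ τ : Finset (Fin 3), τ = ∅ ∨ τ = {0} ∨ τ = {1} ∨ τ = {2}
        ∨ τ = {0,1} ∨ τ = {0,2} ∨ τ = {1,2} ∨ τ = {0,1,2}) τ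
    have hc0 : X 0 * c ∈ I := by
      have := Submodule.mem_colon.mp hc (X 0) (Ideal.subset_span (by simp))
      rwa [smul_eq_mul, mul_comm] at this
    have hc1 : X 1 * c ∈ I := by
      have := Submodule.mem_colon.mp hc (X 1) (Ideal.subset_span (by simp))
      rwa [smul_eq_mul, mul_comm] at this
    have key : Ideal.Quotient.mk I (X 2) * Ideal.Quotient.mk I c = Ideal.Quotient.mk I u := by
      rw [← map_mul, Ideal.Quotient.eq, hbc]
      have : b - u = -a := by rw [← hab]; ring
      rw [this]; exact I.neg_mem ha
    have q0 : Ideal.Quotient.mk I (X 0) * Ideal.Quotient.mk I c = 0 := by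
      rw [← map_mul, Ideal.Quotient.eq_zero_iff_mem.mpr hc0]
    have q1 : Ideal.Quotient.mk I (X 1) * Ideal.Quotient.mk I c = 0 := by
      rw [← map_mul, Ideal.Quotient.eq_zero_iff_mem.mpr hc1]
    rcases h8 with h | h | h | h | h | h | h | h <;> subst h
    · rw [koszulBd, if_neg (by decide : ¬(∅ : Finset (Fin 3)) = {0,1})]
      exact Finset.sum_eq_zero fun j _ => by
        rw [if_neg ((by decide :
          ∀ j : Fin 3, ¬insert j (∅ : Finset (Fin 3)) = {0,1,2}) j), mul_zero, smul_zero]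
    · rw [koszulBd, if_neg (by decide : ¬({0} : Finset (Fin 3)) = {0,1})]
      exact Finset.sum_eq_zero fun j _ => by
        rw [if_neg ((by decide :
          ∀ j : Fin 3, ¬insert j ({0} : Finset (Fin 3)) = {0,1,2}) j), mul_zero, smul_zero]
    · rw [koszulBd, if_neg (by decide : ¬({1} : Finset (Fin 3)) = {0,1})]
      exact Finset.sum_eq_zero fun j _ => by
        rw [if_neg ((by decide :
          ∀ j : Fin 3, ¬insert j ({1} : Finset (Fin 3)) = {0,1,2}) j), mul_zero, smul_zero]
    · rw [koszulBd, if_neg (by decide : ¬({2} : Finset (Fin 3)) = {0,1})]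
      exact Finset.sum_eq_zero fun j _ => by
        rw [if_neg ((by decide :
          ∀ j : Fin 3, ¬insert j ({2} : Finset (Fin 3)) = {0,1,2}) j), mul_zero, smul_zero]
    · rw [koszulBd, show (({0,1} : Finset (Fin 3))ᶜ) = {2} from by decide]
      simp only [Finset.sum_singleton,
        show insert (2:Fin 3) ({0,1} : Finset (Fin 3)) = {0,1,2} from by decide,
        show koszulSgn ({0,1,2} : Finset (Fin 3)) 2 = 1 from by decide, one_smul,
        if_true, key]
    · rw [koszulBd, show (({0,2} : Finset (Fin 3))ᶜ) = {1} from by decide]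
      simp only [Finset.sum_singleton,
        show insert (1:Fin 3) ({0,2} : Finset (Fin 3)) = {0,1,2} from by decide,
        show koszulSgn ({0,1,2} : Finset (Fin 3)) 1 = -1 from by decide, neg_smul, one_smul,
        if_true, q1, neg_zero,
        show (({0,2} : Finset (Fin 3)) = {0,1}) = False from by decide, if_false]
    · rw [koszulBd, show (({1,2} : Finset (Fin 3))ᶜ) = {0} from by decide]
      simp only [Finset.sum_singleton,
        show insert (0:Fin 3) ({1,2} : Finset (Fin 3)) = {0,1,2} from by decide,
        show koszulSgn ({0,1,2} : Finset (Fin 3)) 0 = 1 from by decide, one_smul,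
        if_true, q0,
        show (({1,2} : Finset (Fin 3)) = {0,1}) = False from by decide, if_false]
    · rw [koszulBd, show (({0,1,2} : Finset (Fin 3))ᶜ) = ∅ from by decide, Finset.sum_empty,
        if_neg (by decide : ¬({0,1,2} : Finset (Fin 3)) = {0,1})]
end

section
/- Let I ⊆ k[x_1,…,x_n] be a monomial ideal, σ ⊂ [n] with |σ| = n−1, say σ = [n]∖{n}. A monomial cycle ū e_σ in the Koszul complex of S/I is a boundary if and only if u ∈ I + x_n·(I : (x_1,…,x_{n−1})). -/
/-!
A chain in Koszul degree `n - 1` is a boundary only of a multiple `c e_[n]` of the top basis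
vector, and `∂(c e_[n]) = Σ_i ± x_i c e_{[n] ∖ {i}}`. So `ū e_σ` with `σ = [n] ∖ {n}` is a boundary
iff some `c̄ ∈ S/I` satisfies `x_i c̄ = 0` for `i < n` and `x_n c̄ = ±ū`, i.e. iff `u ≡ x_n c (mod I)`
with `c ∈ I : (x_1, …, x_{n-1})`.
-/

open MvPolynomial

lemma koszulSgn_smul_koszulSgn_smul {n : ℕ} {M : Type*} [AddCommGroup M]
    (τ : Finset (Fin n)) (j : Fin n) (z : M) : koszulSgn τ j • koszulSgn τ j • z = z := by
  rw [smul_smul, koszulSgn, ← pow_add, ← two_mul, pow_mul, neg_one_sq, one_pow, one_smul]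

section KoszulTop

variable {R : Type*} [CommRing R] {n : ℕ} (x : Fin n → R)

lemma koszulBd_erase_univ (w : Finset (Fin n) → R) (i : Fin n) :
    koszulBd x w (Finset.univ.erase i) = koszulSgn Finset.univ i • (x i * w Finset.univ) := by
  rw [koszulBd, Finset.compl_erase, Finset.compl_univ, LawfulSingleton.insert_empty_eq,
    Finset.sum_singleton, Finset.insert_erase (Finset.mem_univ i)]

lemma koszulBd_single_univ_of_ne_erase (c : R) {τ : Finset (Fin n)}
    (hτ : ∀ i, τ ≠ Finset.univ.erase i) : koszulBd x (Pi.single Finset.univ c) τ = 0 := by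
  refine Finset.sum_eq_zero fun j hj => ?_
  have hne : insert j τ ≠ Finset.univ := fun h =>
    hτ j (by rw [← h, Finset.erase_insert (Finset.mem_compl.mp hj)])
  rw [Pi.single_eq_of_ne hne, mul_zero, smul_zero]

theorem exists_koszulBd_eq_iff (i : Fin n) (r : R) :
    (∃ w, koszulBd x w = fun τ => if τ = Finset.univ.erase i then r else 0) ↔
      ∃ c, (∀ j, j ≠ i → x j * c = 0) ∧ x i * c = r := by
  constructor
  · rintro ⟨w, hw⟩
    have hface (j : Fin n) :
        x j * w Finset.univ = koszulSgn Finset.univ j • if j = i then r else 0 := by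
      rw [← koszulSgn_smul_koszulSgn_smul Finset.univ j (x j * _), ← koszulBd_erase_univ, hw]
      simp only [Finset.erase_inj _ (Finset.mem_univ j)]
    refine ⟨koszulSgn Finset.univ i • w Finset.univ, fun j hj => ?_, ?_⟩
    · rw [mul_smul_comm, hface j, if_neg hj, smul_zero, smul_zero]
    · rw [mul_smul_comm, hface i, if_pos rfl, koszulSgn_smul_koszulSgn_smul]
  · rintro ⟨c, hc, rfl⟩
    refine ⟨Pi.single Finset.univ (koszulSgn Finset.univ i • c), funext fun τ => ?_⟩
    by_cases hτ : ∃ j, τ = Finset.univ.erase j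
    · obtain ⟨j, rfl⟩ := hτ
      simp only [koszulBd_erase_univ, Pi.single_eq_same, mul_smul_comm,
        Finset.erase_inj _ (Finset.mem_univ j)]
      by_cases hj : j = i
      · rw [if_pos hj, hj, koszulSgn_smul_koszulSgn_smul]
      · rw [if_neg hj, hc j hj, smul_zero, smul_zero]
    · push Not at hτ
      simp [koszulBd_single_univ_of_ne_erase x _ hτ, hτ i]

end KoszulTop

theorem Ideal.mem_add_span_singleton_mul_colon_iff {S : Type*} [CommRing S] {I : Ideal S}
    {T : Set S} {a u : S} :
    u ∈ I + Ideal.span {a} * I.colon T ↔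
      ∃ c : S ⧸ I, (∀ t ∈ T, Ideal.Quotient.mk I t * c = 0) ∧
        Ideal.Quotient.mk I a * c = Ideal.Quotient.mk I u := by
  rw [Ideal.add_eq_sup, Submodule.mem_sup]
  constructor
  · rintro ⟨v, hv, _, hb, rfl⟩
    obtain ⟨c, hc, rfl⟩ := Ideal.mem_span_singleton_mul.mp hb
    refine ⟨Ideal.Quotient.mk I c, fun t ht => ?_, ?_⟩
    · rw [← map_mul, Ideal.Quotient.eq_zero_iff_mem, mul_comm]
      exact Submodule.mem_colon.mp hc t ht
    · rw [map_add, Ideal.Quotient.eq_zero_iff_mem.mpr hv, zero_add, map_mul]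
  · rintro ⟨c, hcT, hca⟩
    obtain ⟨p, rfl⟩ := Ideal.Quotient.mk_surjective c
    have hp : p ∈ I.colon T := Submodule.mem_colon.mpr fun t ht => by
      rw [smul_eq_mul, mul_comm, ← Ideal.Quotient.eq_zero_iff_mem, map_mul]
      exact hcT t ht
    refine ⟨u - a * p, ?_, a * p, Ideal.mul_mem_mul (Ideal.mem_span_singleton_self a) hp,
      sub_add_cancel u _⟩
    rw [← Ideal.Quotient.eq, ← hca, map_mul]

theorem stmt2_general {k : Type*} [Field k] {m : ℕ}
    (I : Ideal (MvPolynomial (Fin (m + 1)) k)) (u : MvPolynomial (Fin (m + 1)) k) :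
    (∃ w : Finset (Fin (m + 1)) → (MvPolynomial (Fin (m + 1)) k ⧸ I),
        koszulBd (fun i => Ideal.Quotient.mk I (X i)) w
          = fun τ => if τ = Finset.univ.erase (Fin.last m)
              then Ideal.Quotient.mk I u else 0)
      ↔ u ∈ I + Ideal.span {(X (Fin.last m) : MvPolynomial (Fin (m + 1)) k)} *
            Submodule.colon I
              ((Ideal.span {f | ∃ i : Fin (m + 1), i ≠ Fin.last m ∧ f = X i} :
                Ideal (MvPolynomial (Fin (m + 1)) k)) : Set (MvPolynomial (Fin (m + 1)) k)) := by
  rw [exists_koszulBd_eq_iff, Ideal.colon_span, Ideal.mem_add_span_singleton_mul_colon_iff]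
  simp only [Set.mem_ofPred_eq, forall_exists_index, and_imp]
  exact exists_congr fun c => and_congr_left' <|
    ⟨fun h t j hj ht => ht ▸ h j hj, fun h j hj => h _ j hj rfl⟩

/-- for `σ = [n] ∖ {n}` (here: all indices except `Fin.last m` in
`Fin (m+1)`), a monomial cycle `ū e_σ` in the Koszul complex of `S/I` is a boundary
iff `u ∈ I + x_n·(I : (x_1,…,x_{n-1}))`. -/
theorem stmt2 {k : Type*} [Field k] {m : ℕ}
    (I : Ideal (MvPolynomial (Fin (m + 1)) k)) (hI : IsMonomialIdeal I)
    (d : Fin (m + 1) →₀ ℕ) (u : MvPolynomial (Fin (m + 1)) k)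
    (hu : u = monomial d (1 : k))
    (hcyc : ∀ i : Fin (m + 1), i ≠ Fin.last m → X i * u ∈ I) :
    (∃ w : Finset (Fin (m + 1)) → (MvPolynomial (Fin (m + 1)) k ⧸ I),
        koszulBd (fun i => Ideal.Quotient.mk I (X i)) w
          = fun τ => if τ = Finset.univ.erase (Fin.last m)
              then Ideal.Quotient.mk I u else 0)
      ↔ u ∈ I + Ideal.span {(X (Fin.last m) : MvPolynomial (Fin (m + 1)) k)} *
            Submodule.colon I
              ((Ideal.span {f | ∃ i : Fin (m + 1), i ≠ Fin.last m ∧ f = X i} :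
                Ideal (MvPolynomial (Fin (m + 1)) k)) : Set (MvPolynomial (Fin (m + 1)) k)) :=
  stmt2_general I u
end

section
/- Let I ⊆ k[x_1,…,x_n] be a monomial ideal and σ ⊆ [n] with |σ| < n. If u is a monomial with x_i u ∈ I for all i ∈ σ and u ∈ (x_j : j ∉ σ)·(I : (x_i : i ∈ σ)), then the monomial cycle ū e_σ is a boundary in the Koszul complex of S/I. Explicitly, if u = x_ℓ v with ℓ ∉ σ and v ∈ I : (x_i : i ∈ σ), then ū e_σ = ∂(± v̄ e_{σ∪{ℓ}}). -/
open MvPolynomial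

theorem Finset.mem_of_insert_eq_insert_of_ne {α : Type*} [DecidableEq α] {s t : Finset α}
    {a b : α} (ha : a ∉ s) (hb : b ∉ t) (h : insert a s = insert b t) (hst : s ≠ t) :
    a ∈ t := by
  rcases Finset.mem_insert.mp (h ▸ Finset.mem_insert_self a s) with rfl | hat
  · exact absurd (by rw [← erase_insert ha, h, erase_insert hb]) hst
  · exact hat

theorem koszulSgn_mul_self {n : ℕ} (τ : Finset (Fin n)) (j : Fin n) :
    koszulSgn τ j * koszulSgn τ j = 1 := by
  rw [koszulSgn, ← pow_add, ← two_mul, pow_mul, neg_one_sq, one_pow]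

section SingleChain

variable {n : ℕ} {R : Type*} [CommRing R] (x : Fin n → R) {σ : Finset (Fin n)} {ℓ : Fin n}
  (c : R)

theorem koszulBd_single_apply_self (hℓ : ℓ ∉ σ) :
    koszulBd x (fun τ => if τ = insert ℓ σ then c else 0) σ
      = koszulSgn (insert ℓ σ) ℓ • (x ℓ * c) := by
  rw [koszulBd, Finset.sum_eq_single ℓ]
  · rw [if_pos rfl]
  · intro j hj hjℓ
    have hne : insert j σ ≠ insert ℓ σ := fun h =>
      hjℓ (Finset.mem_insert.mp (h ▸ Finset.mem_insert_self j σ) |>.resolve_right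
        (Finset.mem_compl.mp hj))
    rw [if_neg hne, mul_zero, smul_zero]
  · exact fun h => absurd (Finset.mem_compl.mpr hℓ) h

/-- Away from `σ`, the faces of `e_{σ ∪ {ℓ}}` are `x_j e_{σ ∪ {ℓ} ∖ {j}}` with `j ∈ σ`. -/
theorem koszulBd_single_apply_of_ne (hℓ : ℓ ∉ σ) (hann : ∀ j ∈ σ, x j * c = 0)
    {σ' : Finset (Fin n)} (hσ' : σ' ≠ σ) :
    koszulBd x (fun τ => if τ = insert ℓ σ then c else 0) σ' = 0 := by
  refine Finset.sum_eq_zero fun j hj => ?_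
  dsimp only
  split_ifs with hins
  · rw [hann j (Finset.mem_of_insert_eq_insert_of_ne (Finset.mem_compl.mp hj) hℓ hins hσ'),
      smul_zero]
  · rw [mul_zero, smul_zero]

end SingleChain

theorem stmt3_general {k : Type*} [Field k] {n : ℕ}
    (I : Ideal (MvPolynomial (Fin n) k))
    (σ : Finset (Fin n))
    (v : MvPolynomial (Fin n) k)
    (ℓ : Fin n) (hℓ : ℓ ∉ σ)
    (u : MvPolynomial (Fin n) k) (hu : u = X ℓ * v)
    (hvcol : v ∈ Submodule.colon I ((Ideal.span {f | ∃ i ∈ σ, f = X i} : Ideal (MvPolynomial (Fin n) k)) : Set (MvPolynomial (Fin n) k))) :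
    (koszulBd (fun i => Ideal.Quotient.mk I (X i))
        (fun τ => if τ = insert ℓ σ
          then koszulSgn (insert ℓ σ) ℓ • Ideal.Quotient.mk I v else 0)
      = fun τ => if τ = σ then Ideal.Quotient.mk I u else 0)
    ∧ (∃ w : Finset (Fin n) → (MvPolynomial (Fin n) k ⧸ I),
        koszulBd (fun i => Ideal.Quotient.mk I (X i)) w
          = fun τ => if τ = σ then Ideal.Quotient.mk I u else 0) := by
  set ε := koszulSgn (insert ℓ σ) ℓ
  have hann : ∀ j ∈ σ, Ideal.Quotient.mk I (X j) * (ε • Ideal.Quotient.mk I v) = 0 := by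
    intro j hj
    have hXv : X j * v ∈ I := by
      simpa only [smul_eq_mul, mul_comm] using
        Submodule.mem_colon.mp hvcol (X j) (Ideal.subset_span ⟨j, hj, rfl⟩)
    rw [mul_smul_comm, ← map_mul, Ideal.Quotient.eq_zero_iff_mem.mpr hXv, smul_zero]
  have hbd : koszulBd (fun i => Ideal.Quotient.mk I (X i))
        (fun τ => if τ = insert ℓ σ then ε • Ideal.Quotient.mk I v else 0)
      = fun τ => if τ = σ then Ideal.Quotient.mk I u else 0 := by
    funext σ'
    split_ifs with hσ'
    · rw [hσ', koszulBd_single_apply_self _ _ hℓ, mul_smul_comm, smul_smul,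
        koszulSgn_mul_self, one_smul, hu, map_mul]
    · exact koszulBd_single_apply_of_ne _ _ hℓ hann hσ'
  exact ⟨hbd, _, hbd⟩

/-- if `x_i u ∈ I` for all `i ∈ σ` and `u = x_ℓ v` with `ℓ ∉ σ`
and `v ∈ I : (x_i : i ∈ σ)`, then the monomial cycle `ū e_σ` is a boundary;
explicitly `ū e_σ = ∂(sgn(σ∪{ℓ},ℓ) · v̄ e_{σ∪{ℓ}})`. -/
theorem stmt3 {k : Type*} [Field k] {n : ℕ}
    (I : Ideal (MvPolynomial (Fin n) k)) (hI : IsMonomialIdeal I)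
    (σ : Finset (Fin n)) (hσ : σ ≠ Finset.univ)
    (dv : Fin n →₀ ℕ) (v : MvPolynomial (Fin n) k) (hv : v = monomial dv (1 : k))
    (ℓ : Fin n) (hℓ : ℓ ∉ σ)
    (u : MvPolynomial (Fin n) k) (hu : u = X ℓ * v)
    (hcyc : ∀ i ∈ σ, X i * u ∈ I)
    (hvcol : v ∈ Submodule.colon I ((Ideal.span {f | ∃ i ∈ σ, f = X i} : Ideal (MvPolynomial (Fin n) k)) : Set (MvPolynomial (Fin n) k))) :
    (koszulBd (fun i => Ideal.Quotient.mk I (X i))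
        (fun τ => if τ = insert ℓ σ
          then koszulSgn (insert ℓ σ) ℓ • Ideal.Quotient.mk I v else 0)
      = fun τ => if τ = σ then Ideal.Quotient.mk I u else 0)
    ∧ (∃ w : Finset (Fin n) → (MvPolynomial (Fin n) k ⧸ I),
        koszulBd (fun i => Ideal.Quotient.mk I (X i)) w
          = fun τ => if τ = σ then Ideal.Quotient.mk I u else 0) :=
  stmt3_general I σ v ℓ hℓ u hu hvcol
end

section
/- Let I be a symmetric monomial ideal in k[x_1,…,x_n], 2 ≤ p ≤ n, 1 ≤ q ≤ ⌊p/2⌋. Suppose f ∈ I : (x_1,…,x_q) and g ∈ I : (x_{q+1},…,x_p) are monomials with fg ∉ I + (x_{p+1},…,x_n)·(I : (x_1,…,x_p)). Then there exists c ≥ 0 such that f = (x_1⋯x_q)^c and g = (x_{q+1}⋯x_p)^c. -/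
/-!
Pass to exponent vectors: `S = {d | x^d ∈ I}` is an upper set stable under permutations of the
variables, `f = x^a`, `g = x^b`, `A = {1,…,q}`, `B = {q+1,…,p}`. Since `x^a x_i ∈ I` for `i ∈ A`
while `x^(a+b) ∉ I`, `b` vanishes on `A`; symmetrically `a` vanishes on `B`. If `a_i < b_t` for
some `i ∈ A`, `t ∈ B`, transposing `i` and `t` moves `x^a x_i` below `x^(a+b)`, so `a` is constant
on `A` with the same value `c` as `b` on `B`. Finally let `j > p`. If `a_j, b_j > 0` then
`x^(a+b)/x_j ∈ I : (x_1,…,x_p)`. If, say, `b_j = 0 < a_j`, then either `a_j > c` and transposing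
`j` with some `t ∈ B` moves `x^b x_t` below `x^(a+b)`, or `a_j ≤ c` and the same transposition
moves each `x^a x_i` (`i ≤ q`) below `x_i x^(a+b)/x_j`, so again `x^(a+b)/x_j ∈ I : (x_1,…,x_p)`.
-/

open MvPolynomial

/-- `I` is symmetric: stable under the permutation action on the variables. -/
def IsSymmetricIdeal {k : Type*} [Field k] {n : ℕ}
    (I : Ideal (MvPolynomial (Fin n) k)) : Prop :=
  ∀ (π : Equiv.Perm (Fin n)) (f : MvPolynomial (Fin n) k),
    f ∈ I → rename π f ∈ I

open Finsupp

theorem Finsupp.le_of_add_single_eq_add {σ : Type*} {a b d : σ →₀ ℕ} {j : σ}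
    (hd : d + single j 1 = a + b) (hb : b j ≠ 0) : a ≤ d :=
  le_of_add_le_add_right <| hd ▸ add_le_add le_rfl (single_le_iff.2 (Nat.one_le_iff_ne_zero.2 hb))

/-- Exponent-vector form of the hypotheses: `S` is the set of exponents of monomials of `I`,
`x^a ∈ I : (x_i)_{i ∈ A}`, `x^b ∈ I : (x_i)_{i ∈ B}` and
`x^(a+b) ∉ I + (x_j)_{j ∉ A ∪ B} · (I : (x_i)_{i ∈ A ∪ B})`. -/
structure IsExceptionalPair {σ : Type*} [DecidableEq σ] (S : Set (σ →₀ ℕ)) (A B : Finset σ)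
    (a b : σ →₀ ℕ) : Prop where
  add_single_left_mem : ∀ i ∈ A, a + single i 1 ∈ S
  add_single_right_mem : ∀ i ∈ B, b + single i 1 ∈ S
  add_notMem : a + b ∉ S
  exists_add_single_notMem :
    ∀ j ∉ A ∪ B, ∀ d, d + single j 1 = a + b → ∃ i ∈ A ∪ B, d + single i 1 ∉ S

namespace IsExceptionalPair

variable {σ : Type*} [DecidableEq σ] {S : Set (σ →₀ ℕ)} {A B : Finset σ} {a b : σ →₀ ℕ}

theorem symm (h : IsExceptionalPair S A B a b) : IsExceptionalPair S B A b a where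
  add_single_left_mem := h.add_single_right_mem
  add_single_right_mem := h.add_single_left_mem
  add_notMem := add_comm a b ▸ h.add_notMem
  exists_add_single_notMem j hj d hd := by
    rw [Finset.union_comm] at hj ⊢
    exact h.exists_add_single_notMem j hj d (hd.trans (add_comm b a))

theorem mem_of_swap_le (hS : IsUpperSet S)
    (hperm : ∀ π : Equiv.Perm σ, ∀ d ∈ S, equivMapDomain π d ∈ S) {u d : σ →₀ ℕ} (hu : u ∈ S)
    (i t : σ) (h : ∀ x, u (Equiv.swap i t x) ≤ d x) : d ∈ S :=
  hS (le_def.2 fun x => by simpa using h x) (hperm (Equiv.swap i t) u hu)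

variable (h : IsExceptionalPair S A B a b) (hS : IsUpperSet S)
  (hperm : ∀ π : Equiv.Perm σ, ∀ d ∈ S, equivMapDomain π d ∈ S)
include h hS

theorem right_apply_eq_zero {i : σ} (hi : i ∈ A) : b i = 0 := by
  by_contra hb
  refine h.add_notMem (hS ?_ (h.add_single_left_mem i hi))
  exact add_le_add le_rfl (single_le_iff.2 (Nat.one_le_iff_ne_zero.2 hb))

theorem left_apply_eq_zero {t : σ} (ht : t ∈ B) : a t = 0 :=
  h.symm.right_apply_eq_zero hS ht

theorem left_apply_eq_zero_or_right_apply_eq_zero {j : σ} (hj : j ∉ A ∪ B) :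
    a j = 0 ∨ b j = 0 := by
  by_contra! hab
  have hd : a + b - single j 1 + single j 1 = a + b :=
    sub_add_single_one_cancel (by simp [hab.1])
  obtain ⟨i, hi, hdi⟩ := h.exists_add_single_notMem j hj _ hd
  rcases Finset.mem_union.1 hi with hiA | hiB
  · exact hdi (hS (add_le_add (le_of_add_single_eq_add hd hab.2) le_rfl)
      (h.add_single_left_mem i hiA))
  · exact hdi (hS (add_le_add (le_of_add_single_eq_add (hd.trans (add_comm a b)) hab.1) le_rfl)
      (h.add_single_right_mem i hiB))

include hperm

theorem right_apply_le_left_apply {i t : σ} (hi : i ∈ A) (ht : t ∈ B) : b t ≤ a i := by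
  by_contra! hlt
  have hbi := h.right_apply_eq_zero hS hi
  have hat := h.left_apply_eq_zero hS ht
  refine h.add_notMem (mem_of_swap_le hS hperm (h.add_single_left_mem i hi) i t fun x => ?_)
  simp only [Finsupp.add_apply, single_apply, Equiv.swap_apply_def]
  split_ifs <;> subst_vars <;> simp_all

theorem left_apply_eq_right_apply {i t : σ} (hi : i ∈ A) (ht : t ∈ B) : a i = b t :=
  le_antisymm (h.symm.right_apply_le_left_apply hS hperm ht hi)
    (h.right_apply_le_left_apply hS hperm hi ht)

theorem left_apply_eq_zero_of_right_apply_eq_zero {j t : σ} (hj : j ∉ A ∪ B) (ht : t ∈ B)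
    (hbj : b j = 0) : a j = 0 := by
  have hat := h.left_apply_eq_zero hS ht
  by_contra haj
  rcases lt_or_ge (b t) (a j) with hlt | hle
  · refine h.add_notMem (mem_of_swap_le hS hperm (h.add_single_right_mem t ht) t j fun x => ?_)
    simp only [Finsupp.add_apply, single_apply, Equiv.swap_apply_def]
    split_ifs <;> subst_vars <;> simp_all
  · have hd : a + b - single j 1 + single j 1 = a + b :=
      sub_add_single_one_cancel (by simp [haj])
    obtain ⟨i, hi, hdi⟩ := h.exists_add_single_notMem j hj _ hd
    rcases Finset.mem_union.1 hi with hiA | hiB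
    · have hbi := h.right_apply_eq_zero hS hiA
      refine hdi (mem_of_swap_le hS hperm (h.add_single_left_mem i hiA) j t fun x => ?_)
      simp only [Finsupp.add_apply, Finsupp.tsub_apply, single_apply, Equiv.swap_apply_def]
      split_ifs <;> subst_vars <;> simp_all
    · exact hdi (hS (add_le_add (le_of_add_single_eq_add (hd.trans (add_comm a b)) haj) le_rfl)
        (h.add_single_right_mem i hiB))

theorem right_apply_eq_zero_of_left_apply_eq_zero {j i : σ} (hj : j ∉ A ∪ B) (hi : i ∈ A)
    (haj : a j = 0) : b j = 0 :=
  h.symm.left_apply_eq_zero_of_right_apply_eq_zero hS hperm (by rwa [Finset.union_comm]) hi haj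

theorem apply_eq_zero_of_notMem {i j t : σ} (hj : j ∉ A ∪ B) (hi : i ∈ A) (ht : t ∈ B) :
    a j = 0 ∧ b j = 0 := by
  rcases h.left_apply_eq_zero_or_right_apply_eq_zero hS hj with haj | hbj
  · exact ⟨haj, h.right_apply_eq_zero_of_left_apply_eq_zero hS hperm hj hi haj⟩
  · exact ⟨h.left_apply_eq_zero_of_right_apply_eq_zero hS hperm hj ht hbj, hbj⟩

theorem left_eq_sum_single {i t : σ} (hi : i ∈ A) (ht : t ∈ B) :
    a = ∑ x ∈ A, single x (b t) := by
  ext x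
  simp only [finsetSum_apply, single_apply, Finset.sum_ite_eq']
  split_ifs with hxA
  · exact h.left_apply_eq_right_apply hS hperm hxA ht
  · by_cases hxB : x ∈ B
    · exact h.left_apply_eq_zero hS hxB
    · exact (h.apply_eq_zero_of_notMem hS hperm (by simp [hxA, hxB]) hi ht).1

theorem exists_eq_sum_single (hA : A.Nonempty) (hB : B.Nonempty) :
    ∃ c, a = ∑ x ∈ A, single x c ∧ b = ∑ x ∈ B, single x c := by
  obtain ⟨i, hi⟩ := hA
  obtain ⟨t, ht⟩ := hB
  refine ⟨b t, h.left_eq_sum_single hS hperm hi ht, ?_⟩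
  rw [← h.left_apply_eq_right_apply hS hperm hi ht]
  exact h.symm.left_eq_sum_single hS hperm ht hi

end IsExceptionalPair

theorem IsSymmetricIdeal.monomial_equivMapDomain_mem {k : Type*} [Field k] {n : ℕ}
    {I : Ideal (MvPolynomial (Fin n) k)} (hsym : IsSymmetricIdeal I) (π : Equiv.Perm (Fin n))
    (d : Fin n →₀ ℕ) (hd : monomial d (1 : k) ∈ I) : monomial (equivMapDomain π d) (1 : k) ∈ I := by
  simpa [rename_monomial, equivMapDomain_eq_mapDomain] using hsym π _ hd

namespace MvPolynomial

variable {σ R : Type*} [CommSemiring R] {I : Ideal (MvPolynomial σ R)} {d : σ →₀ ℕ}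

theorem isUpperSet_setOf_monomial_mem (I : Ideal (MvPolynomial σ R)) :
    IsUpperSet {d | monomial d (1 : R) ∈ I} :=
  fun _ _ hle hu => I.mem_of_dvd (monomial_dvd_monomial.2 ⟨Or.inr hle, one_dvd _⟩) hu

theorem monomial_mul_X (d : σ →₀ ℕ) (i : σ) :
    monomial d (1 : R) * X i = monomial (d + single i 1) 1 := by
  rw [monomial_add_single, pow_one]

theorem monomial_add_single_mem_of_mem_colon {T : Set (MvPolynomial σ R)}
    (h : monomial d 1 ∈ I.colon T) {i : σ} (hi : X i ∈ T) : monomial (d + single i 1) 1 ∈ I := by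
  simpa [monomial_mul_X] using Submodule.mem_colon.1 h _ hi

theorem exists_mul_notMem_of_notMem_sup_mul_colon {J : Ideal (MvPolynomial σ R)}
    {T : Set (MvPolynomial σ R)} {e : σ →₀ ℕ} (h : monomial e (1 : R) ∉ I + J * I.colon T)
    {j : σ} (hj : X j ∈ J) (hd : d + single j 1 = e) : ∃ t ∈ T, monomial d 1 * t ∉ I := by
  by_contra! hT
  refine h (Submodule.mem_sup_right ?_)
  rw [← hd, ← monomial_mul_X, mul_comm (monomial d 1)]
  exact Ideal.mul_mem_mul hj (Submodule.mem_colon.2 hT)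

theorem prod_X_pow_eq_monomial_sum_single [DecidableEq σ] (A : Finset σ) (c : ℕ) :
    (∏ i ∈ A, (X i : MvPolynomial σ R)) ^ c = monomial (∑ i ∈ A, single i c) 1 := by
  rw [← Finset.prod_pow, monomial_sum_one]
  simp [X_pow_eq_monomial]

end MvPolynomial

theorem stmt10_general {k : Type*} [Field k] {n p q : ℕ}
    (hpn : p ≤ n) (hq1 : 1 ≤ q) (hq2 : q ≤ p / 2)
    (I : Ideal (MvPolynomial (Fin n) k))
    (hsym : IsSymmetricIdeal I)
    (f g : MvPolynomial (Fin n) k)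
    (hf : ∃ a, f = monomial a (1 : k)) (hg : ∃ b, g = monomial b (1 : k))
    (hfc : f ∈ Submodule.colon I
      ((Ideal.span {x | ∃ i : Fin n, i.val < q ∧ x = X i} : Ideal (MvPolynomial (Fin n) k)) : Set (MvPolynomial (Fin n) k)))
    (hgc : g ∈ Submodule.colon I
      ((Ideal.span {x | ∃ i : Fin n, q ≤ i.val ∧ i.val < p ∧ x = X i} : Ideal (MvPolynomial (Fin n) k)) : Set (MvPolynomial (Fin n) k)))
    (hng : f * g ∉ I +
      Ideal.span {x | ∃ i : Fin n, p ≤ i.val ∧ x = X i} *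
        Submodule.colon I ((Ideal.span {x | ∃ i : Fin n, i.val < p ∧ x = X i} : Ideal (MvPolynomial (Fin n) k)) : Set (MvPolynomial (Fin n) k))) :
    ∃ c : ℕ,
      f = (∏ i ∈ Finset.univ.filter (fun i : Fin n => i.val < q), X i) ^ c
      ∧ g = (∏ i ∈ Finset.univ.filter (fun i : Fin n => q ≤ i.val ∧ i.val < p), X i) ^ c := by
  classical
  obtain ⟨a, rfl⟩ := hf
  obtain ⟨b, rfl⟩ := hg
  rw [monomial_mul, one_mul, Ideal.colon_span] at hng
  set A := Finset.univ.filter fun i : Fin n => i.val < q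
  set B := Finset.univ.filter fun i : Fin n => q ≤ i.val ∧ i.val < p
  have hpair : IsExceptionalPair {d | monomial d (1 : k) ∈ I} A B a b :=
    { add_single_left_mem := fun i hi => monomial_add_single_mem_of_mem_colon hfc
        (Ideal.subset_span ⟨i, by simpa [A] using hi, rfl⟩)
      add_single_right_mem := fun t ht => monomial_add_single_mem_of_mem_colon hgc
        (Ideal.subset_span ⟨t, by simp only [B, Finset.mem_filter] at ht; simpa using ht.2⟩)
      add_notMem := fun hab => hng (Submodule.mem_sup_left hab)
      exists_add_single_notMem := fun j hj d hd => by
        obtain ⟨_, ⟨i, hi, rfl⟩, hdi⟩ := exists_mul_notMem_of_notMem_sup_mul_colon hng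
          (Ideal.subset_span ⟨j, by simp [A, B] at hj; omega, rfl⟩) hd
        exact ⟨i, by simp [A, B]; omega, by rwa [monomial_mul_X] at hdi⟩ }
  obtain ⟨c, rfl, rfl⟩ := hpair.exists_eq_sum_single (isUpperSet_setOf_monomial_mem I)
    hsym.monomial_equivMapDomain_mem ⟨⟨0, by omega⟩, by simp [A]; omega⟩
    ⟨⟨q, by omega⟩, by simp [B]; omega⟩
  exact ⟨c, (prod_X_pow_eq_monomial_sum_single _ c).symm,
    (prod_X_pow_eq_monomial_sum_single _ c).symm⟩

/-- for a symmetric monomial ideal `I`, `2 ≤ p ≤ n`, `1 ≤ q ≤ ⌊p/2⌋`,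
monomials `f ∈ I : (x_1,…,x_q)`, `g ∈ I : (x_{q+1},…,x_p)` with
`fg ∉ I + (x_{p+1},…,x_n)·(I : (x_1,…,x_p))` satisfy
`f = (x_1⋯x_q)^c` and `g = (x_{q+1}⋯x_p)^c` for some `c`. -/
theorem stmt10 {k : Type*} [Field k] {n p q : ℕ}
    (hp2 : 2 ≤ p) (hpn : p ≤ n) (hq1 : 1 ≤ q) (hq2 : q ≤ p / 2)
    (I : Ideal (MvPolynomial (Fin n) k))
    (hmon : IsMonomialIdeal I) (hsym : IsSymmetricIdeal I)
    (f g : MvPolynomial (Fin n) k)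
    (hf : ∃ a, f = monomial a (1 : k)) (hg : ∃ b, g = monomial b (1 : k))
    (hfc : f ∈ Submodule.colon I
      ((Ideal.span {x | ∃ i : Fin n, i.val < q ∧ x = X i} : Ideal (MvPolynomial (Fin n) k)) : Set (MvPolynomial (Fin n) k)))
    (hgc : g ∈ Submodule.colon I
      ((Ideal.span {x | ∃ i : Fin n, q ≤ i.val ∧ i.val < p ∧ x = X i} : Ideal (MvPolynomial (Fin n) k)) : Set (MvPolynomial (Fin n) k)))
    (hng : f * g ∉ I +
      Ideal.span {x | ∃ i : Fin n, p ≤ i.val ∧ x = X i} *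
        Submodule.colon I ((Ideal.span {x | ∃ i : Fin n, i.val < p ∧ x = X i} : Ideal (MvPolynomial (Fin n) k)) : Set (MvPolynomial (Fin n) k))) :
    ∃ c : ℕ,
      f = (∏ i ∈ Finset.univ.filter (fun i : Fin n => i.val < q), X i) ^ c
      ∧ g = (∏ i ∈ Finset.univ.filter (fun i : Fin n => q ≤ i.val ∧ i.val < p), X i) ^ c :=
  stmt10_general hpn hq1 hq2 I hsym f g hf hg hfc hgc hng
end

section
/- Let I be a symmetric monomial ideal in k[x_1,…,x_n], 2 ≤ p ≤ n, 1 ≤ q ≤ ⌊p/2⌋. If f, g are monomials as in the previous setup with fg ∉ I + (x_{p+1},…,x_n)·(I : (x_1,…,x_p)), so f = (x_1⋯x_q)^c and g = (x_{q+1}⋯x_p)^c, then c + 1 = min{λ_1 : λ ∈ Λ(I), ℓ(λ) ≤ p−q}, where the minimum is over generating partitions of I of length at most p−q. -/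
/-!
Since `g · x_{q+1} ∈ I`, some generator `x^(λ ∘ π)` divides it. Its exponents are at most `c + 1`
and vanish outside the `p - q` variables `x_{q+1}, …, x_p`, so `λ₁ ≤ c + 1` and, `λ` being a
partition, `ℓ(λ) ≤ p - q`. Conversely, a generating partition `μ` with `ℓ(μ) ≤ p - q` and
`μ₁ ≤ c` can be permuted into those variables, which would give `g ∈ I` and hence `fg ∈ I`.
-/

open MvPolynomial Finset

theorem Fin.card_filter_le_val_and_val_lt {n a b : ℕ} (hb : b ≤ n) :
    #{i : Fin n | a ≤ i ∧ (i : ℕ) < b} = b - a := by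
  rw [← Nat.card_Ico, ← card_map Fin.valEmbedding]
  congr 1
  ext x
  simp only [mem_map, mem_filter, mem_univ, true_and, Fin.valEmbedding_apply, mem_Ico]
  exact ⟨by rintro ⟨i, hi, rfl⟩; exact hi, fun hx => ⟨⟨x, by omega⟩, hx, rfl⟩⟩

theorem Finset.exists_perm_card_le_of_notMem {n : ℕ} (t : Finset (Fin n)) :
    ∃ π : Equiv.Perm (Fin n), ∀ i ∉ t, #t ≤ (π i : ℕ) := by
  have e : {i // i ∈ t} ≃ {i : Fin n // (i : ℕ) < #t} :=
    Fintype.equivOfCardEq <| by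
      simp [Fintype.card_subtype, Fin.card_filter_val_lt,
        (card_le_univ t).trans_eq (Fintype.card_fin n)]
  exact ⟨e.extendSubtype, fun i hi => not_lt.mp (e.extendSubtype_not_mem i hi)⟩

theorem Antitone.apply_eq_zero_of_card_le {n : ℕ} {lam : Fin n → ℕ} (hlam : Antitone lam)
    {π : Equiv.Perm (Fin n)} {t : Finset (Fin n)} (ht : ∀ i ∉ t, lam (π i) = 0) {i : Fin n}
    (hi : #t ≤ i) : lam i = 0 := by
  by_contra hne
  have hmaps : Set.MapsTo π.symm (Iic i) t := fun x hx => by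
    by_contra hxt
    have hx0 := ht _ hxt
    rw [Equiv.apply_symm_apply] at hx0
    exact hne (Nat.eq_zero_of_le_zero (hx0 ▸ hlam (mem_Iic.mp hx)))
  have := card_le_card_of_injOn π.symm hmaps π.symm.injective.injOn
  rw [Fin.card_Iic] at this
  omega

theorem Finset.prod_pow_eq_prod_pow_ite {ι M : Type*} [CommMonoid M] [Fintype ι] [DecidableEq ι]
    (t : Finset ι) (f : ι → M) (c : ℕ) :
    (∏ i ∈ t, f i) ^ c = ∏ i, f i ^ (if i ∈ t then c else 0) := by
  simp_rw [pow_ite, pow_zero]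
  rw [prod_ite_mem, univ_inter, prod_pow]

namespace MvPolynomial

section Fintype

variable {σ R : Type*} [CommSemiring R] [Fintype σ]

theorem prod_X_pow_eq_monomial_equivFunOnFinite_symm (d : σ → ℕ) :
    ∏ i, (X i : MvPolynomial σ R) ^ d i = monomial (Finsupp.equivFunOnFinite.symm d) 1 := by
  rw [monomial_eq, C_1, one_mul, Finsupp.prod_fintype _ _ fun _ => pow_zero _]
  rfl

variable (R) in
noncomputable def symmetricMonomialIdeal (Λ : Set (σ → ℕ)) : Ideal (MvPolynomial σ R) :=
  Ideal.span {f | ∃ lam ∈ Λ, ∃ π : Equiv.Perm σ, f = ∏ i, X i ^ lam (π i)}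

theorem prod_X_pow_mem_symmetricMonomialIdeal_iff [Nontrivial R] {Λ : Set (σ → ℕ)}
    {e : σ → ℕ} :
    ∏ i, (X i : MvPolynomial σ R) ^ e i ∈ symmetricMonomialIdeal R Λ ↔
      ∃ lam ∈ Λ, ∃ π : Equiv.Perm σ, ∀ i, lam (π i) ≤ e i := by
  have hgen :
      {f | ∃ lam ∈ Λ, ∃ π : Equiv.Perm σ, f = ∏ i, (X i : MvPolynomial σ R) ^ lam (π i)} =
      (fun s => monomial s 1) ''
        {s | ∃ lam ∈ Λ, ∃ π : Equiv.Perm σ, s = Finsupp.equivFunOnFinite.symm (lam ∘ π)} := by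
    ext f
    simp only [Set.mem_ofPred_eq, Set.mem_image]
    constructor
    · rintro ⟨lam, hlam, π, rfl⟩
      exact ⟨_, ⟨lam, hlam, π, rfl⟩, (prod_X_pow_eq_monomial_equivFunOnFinite_symm _).symm⟩
    · rintro ⟨_, ⟨lam, hlam, π, rfl⟩, rfl⟩
      exact ⟨lam, hlam, π, (prod_X_pow_eq_monomial_equivFunOnFinite_symm _).symm⟩
  classical
  rw [symmetricMonomialIdeal, hgen, prod_X_pow_eq_monomial_equivFunOnFinite_symm,
    mem_ideal_span_monomial_image, support_monomial, if_neg one_ne_zero]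
  simp [Finsupp.le_def]

end Fintype

section Partitions

variable {R : Type*} [CommSemiring R] [Nontrivial R] {n : ℕ} {Λ : Set (Fin n → ℕ)}

theorem exists_mem_bounded_of_prod_X_pow_mem_symmetricMonomialIdeal
    (hΛ : ∀ lam ∈ Λ, Antitone lam) {e : Fin n → ℕ} {t : Finset (Fin n)}
    (ht : ∀ i ∉ t, e i = 0) {b : ℕ} (hb : ∀ i, e i ≤ b)
    (he : ∏ i, (X i : MvPolynomial (Fin n) R) ^ e i ∈ symmetricMonomialIdeal R Λ) :
    ∃ lam ∈ Λ, (∀ i : Fin n, #t ≤ i → lam i = 0) ∧ ∀ i, lam i ≤ b := by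
  obtain ⟨lam, hlam, π, hle⟩ := prod_X_pow_mem_symmetricMonomialIdeal_iff.mp he
  refine ⟨lam, hlam, fun i => (hΛ lam hlam).apply_eq_zero_of_card_le (π := π) fun j hj => ?_,
    fun i => ?_⟩
  · exact Nat.eq_zero_of_le_zero (ht j hj ▸ hle j)
  · simpa using (hle (π.symm i)).trans (hb _)

theorem exists_mem_bounded_of_prod_pow_mul_X_mem_symmetricMonomialIdeal
    (hΛ : ∀ lam ∈ Λ, Antitone lam) {t : Finset (Fin n)} {j : Fin n} (hj : j ∈ t) (c : ℕ)
    (h : (∏ i ∈ t, (X i : MvPolynomial (Fin n) R)) ^ c * X j ∈ symmetricMonomialIdeal R Λ) :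
    ∃ lam ∈ Λ, (∀ i : Fin n, #t ≤ i → lam i = 0) ∧ ∀ i, lam i ≤ c + 1 := by
  classical
  have hprod : (∏ i ∈ t, (X i : MvPolynomial (Fin n) R)) ^ c * X j =
      ∏ i, X i ^ ((if i ∈ t then c else 0) + if j = i then 1 else 0) := by
    simp_rw [prod_pow_eq_prod_pow_ite, pow_add, prod_mul_distrib, pow_ite, pow_one, pow_zero,
      prod_ite_eq, if_pos (mem_univ j)]
  rw [hprod] at h
  refine exists_mem_bounded_of_prod_X_pow_mem_symmetricMonomialIdeal hΛ (fun i hi => ?_)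
    (fun i => by split_ifs <;> omega) h
  rw [if_neg hi, if_neg (ne_of_mem_of_not_mem hj hi)]

theorem prod_pow_mem_symmetricMonomialIdeal {lam : Fin n → ℕ} (hlam : lam ∈ Λ)
    (t : Finset (Fin n)) (hlen : ∀ i : Fin n, #t ≤ i → lam i = 0) {c : ℕ}
    (hc : ∀ i, lam i ≤ c) :
    (∏ i ∈ t, (X i : MvPolynomial (Fin n) R)) ^ c ∈ symmetricMonomialIdeal R Λ := by
  classical
  obtain ⟨π, hπ⟩ := t.exists_perm_card_le_of_notMem
  rw [prod_pow_eq_prod_pow_ite]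
  refine prod_X_pow_mem_symmetricMonomialIdeal_iff.mpr ⟨lam, hlam, π, fun i => ?_⟩
  split_ifs with hi
  · exact hc _
  · exact (hlen _ (hπ i hi)).le

end Partitions

end MvPolynomial

theorem stmt11_general {k : Type*} [Field k] {n p q : ℕ}
    (hn : 0 < n) (hp2 : 2 ≤ p) (hpn : p ≤ n) (hq2 : q ≤ p / 2)
    (Λ : Set (Fin n → ℕ)) (hΛ : ∀ lam ∈ Λ, Antitone lam)
    (I : Ideal (MvPolynomial (Fin n) k))
    (hI : I = Ideal.span
      {f | ∃ lam ∈ Λ, ∃ π : Equiv.Perm (Fin n), f = ∏ i : Fin n, X i ^ lam (π i)})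
    (c : ℕ)
    (f g : MvPolynomial (Fin n) k)
    (hg : g = (∏ i ∈ Finset.univ.filter (fun i : Fin n => q ≤ i.val ∧ i.val < p), X i) ^ c)
    (hgc : g ∈ Submodule.colon I
      ((Ideal.span {x | ∃ i : Fin n, q ≤ i.val ∧ i.val < p ∧ x = X i} : Ideal (MvPolynomial (Fin n) k)) : Set (MvPolynomial (Fin n) k)))
    (hng : f * g ∉ I +
      Ideal.span {x | ∃ i : Fin n, p ≤ i.val ∧ x = X i} *
        Submodule.colon I ((Ideal.span {x | ∃ i : Fin n, i.val < p ∧ x = X i} : Ideal (MvPolynomial (Fin n) k)) : Set (MvPolynomial (Fin n) k))) :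
    c + 1 = sInf {m : ℕ | ∃ lam ∈ Λ,
      (∀ i : Fin n, (p - q : ℕ) ≤ i.val → lam i = 0) ∧ m = lam ⟨0, hn⟩} := by
  have hqp : q < p := by omega
  have hcard : #{i : Fin n | q ≤ i ∧ (i : ℕ) < p} = p - q :=
    Fin.card_filter_le_val_and_val_lt hpn
  set j : Fin n := ⟨q, hqp.trans_le hpn⟩
  have hgj : g * X j ∈ I := by
    simpa [smul_eq_mul] using
      Submodule.mem_colon.mp hgc (X j) (Ideal.subset_span ⟨j, le_rfl, hqp, rfl⟩)
  rw [hg, hI] at hgj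
  obtain ⟨lam, hlam, hlen, hle⟩ :=
    exists_mem_bounded_of_prod_pow_mul_X_mem_symmetricMonomialIdeal hΛ (by simp [j, hqp]) c hgj
  have hlower : ∀ m ∈ {m : ℕ | ∃ lam ∈ Λ,
      (∀ i : Fin n, (p - q : ℕ) ≤ i.val → lam i = 0) ∧ m = lam ⟨0, hn⟩}, c + 1 ≤ m := by
    rintro _ ⟨mu, hmu, hmulen, rfl⟩
    by_contra! hlt
    have hgI : g ∈ I := by
      rw [hg, hI]
      exact prod_pow_mem_symmetricMonomialIdeal hmu _ (hcard ▸ hmulen)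
        fun i => (hΛ mu hmu (Nat.zero_le i.val)).trans (Nat.le_of_lt_succ hlt)
    exact hng (Submodule.mem_sup_left (I.mul_mem_left f hgI))
  have hlam0 : c + 1 = lam ⟨0, hn⟩ :=
    le_antisymm (hlower _ ⟨lam, hlam, hcard ▸ hlen, rfl⟩) (hle _)
  refine (IsLeast.csInf_eq ⟨?_, hlower⟩).symm
  exact ⟨lam, hlam, hcard ▸ hlen, hlam0⟩

/-- let `I` be the symmetric monomial ideal generated by the
`S_n`-orbits of the monomials `x^λ`, `λ ∈ Λ` a set of partitions (antitone
exponent vectors). If `f = (x_1⋯x_q)^c ∈ I : (x_1,…,x_q)` and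
`g = (x_{q+1}⋯x_p)^c ∈ I : (x_{q+1},…,x_p)` are monomials with
`fg ∉ I + (x_{p+1},…,x_n)·(I : (x_1,…,x_p))`, then
`c + 1 = min{λ₁ : λ ∈ Λ(I), ℓ(λ) ≤ p − q}`. -/
theorem stmt11 {k : Type*} [Field k] {n p q : ℕ}
    (hn : 0 < n) (hp2 : 2 ≤ p) (hpn : p ≤ n) (hq1 : 1 ≤ q) (hq2 : q ≤ p / 2)
    (Λ : Set (Fin n → ℕ)) (hΛ : ∀ lam ∈ Λ, Antitone lam)
    (I : Ideal (MvPolynomial (Fin n) k))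
    (hI : I = Ideal.span
      {f | ∃ lam ∈ Λ, ∃ π : Equiv.Perm (Fin n), f = ∏ i : Fin n, X i ^ lam (π i)})
    (c : ℕ)
    (f g : MvPolynomial (Fin n) k)
    (hf : f = (∏ i ∈ Finset.univ.filter (fun i : Fin n => i.val < q), X i) ^ c)
    (hg : g = (∏ i ∈ Finset.univ.filter (fun i : Fin n => q ≤ i.val ∧ i.val < p), X i) ^ c)
    (hfc : f ∈ Submodule.colon I
      ((Ideal.span {x | ∃ i : Fin n, i.val < q ∧ x = X i} : Ideal (MvPolynomial (Fin n) k)) : Set (MvPolynomial (Fin n) k)))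
    (hgc : g ∈ Submodule.colon I
      ((Ideal.span {x | ∃ i : Fin n, q ≤ i.val ∧ i.val < p ∧ x = X i} : Ideal (MvPolynomial (Fin n) k)) : Set (MvPolynomial (Fin n) k)))
    (hng : f * g ∉ I +
      Ideal.span {x | ∃ i : Fin n, p ≤ i.val ∧ x = X i} *
        Submodule.colon I ((Ideal.span {x | ∃ i : Fin n, i.val < p ∧ x = X i} : Ideal (MvPolynomial (Fin n) k)) : Set (MvPolynomial (Fin n) k))) :
    c + 1 = sInf {m : ℕ | ∃ lam ∈ Λ,
      (∀ i : Fin n, (p - q : ℕ) ≤ i.val → lam i = 0) ∧ m = lam ⟨0, hn⟩} :=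
  stmt11_general hn hp2 hpn hq2 Λ hΛ I hI c f g hg hgc hng
end

section
/- Let I ⊆ k[x_1,…,x_n] be a stable monomial ideal (for every minimal generator u and every i ≤ max(u), x_i·u/x_{max(u)} ∈ I). Then, with generators ordered by reverse lexicographic order (under which I has linear quotients), for every minimal generator u and every t ∈ set(u), x_{max(u)} divides (x_t u)/g(x_t u). -/
/-- `a` precedes `b` in the (paper's) reverse lexicographic order on exponent
vectors: at the largest index where they differ, `a` is smaller. -/
def RevLexLt {n : ℕ} (a b : Fin n → ℕ) : Prop :=
  ∃ i : Fin n, a i < b i ∧ ∀ i' : Fin n, i < i' → a i' = b i'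

/-- Graded reverse lexicographic precedence. -/
def GradedRevLexLt {n : ℕ} (a b : Fin n → ℕ) : Prop :=
  (∑ i : Fin n, a i < ∑ i : Fin n, b i) ∨
    ((∑ i : Fin n, a i = ∑ i : Fin n, b i) ∧ RevLexLt a b)

lemma RevLexLt.asymm {n : ℕ} {a b : Fin n → ℕ} (h : RevLexLt a b) (h' : RevLexLt b a) :
    False := by
  obtain ⟨i, h1, h2⟩ := h
  obtain ⟨i', h1', h2'⟩ := h'
  rcases lt_trichotomy i i' with hlt | heq | hgt
  · have := h2 i' hlt; omega
  · subst heq; omega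
  · have := h2' i hgt; omega

lemma sum_shift {n : ℕ} (f : Fin n → ℕ) (a b : Fin n) (hab : a ≠ b) (hb : 1 ≤ f b) :
    ∑ s, (f s + (if s = a then 1 else 0) - (if s = b then 1 else 0)) = ∑ s, f s := by
  rw [Finset.sum_tsub_distrib _ (by
    intro x _
    by_cases hx : x = b
    · subst hx; simp only [if_neg hab.symm, add_zero]; exact hb
    · simp [hx])]
  simp [Finset.sum_add_distrib, Finset.sum_ite_eq']

/-- monomials are encoded by exponent vectors `Fin n → ℕ`
(`u ∣ w ↔ u ≤ w` pointwise). Let `I` be the stable monomial ideal minimally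
generated by the distinct monomials `u 0, …, u (m-1)`, listed in (graded) revlex
order. Then for every generator `u j` and every `t ∈ set(u j)`, the variable
`x_{max(u j)}` divides `(x_t · u j) / g(x_t · u j)`. -/
theorem stmt16 {n m : ℕ} (u : Fin m → (Fin n → ℕ))
    (hmin : ∀ i j : Fin m, i ≠ j → ¬ u i ≤ u j)
    (horder : ∀ j j' : Fin m, j < j' → GradedRevLexLt (u j) (u j'))
    -- stability: for every generator `u j` with `max(u j) = M` and every `t ≤ M`,
    -- `x_t · (u j) / x_M ∈ I`
    (hstable : ∀ (j : Fin m) (M : Fin n),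
      u j M ≠ 0 → (∀ i : Fin n, u j i ≠ 0 → i ≤ M) →
      ∀ t : Fin n, t ≤ M →
        ∃ j', u j' ≤ fun s =>
          u j s + (if s = t then 1 else 0) - (if s = M then 1 else 0)) :
    ∀ (j : Fin m) (t : Fin n),
      -- `t ∈ set(u j)`, i.e. `x_t ∈ (u_1,…,u_{j-1}) : u_j`
      (∃ i, i < j ∧ u i ≤ fun s => (if s = t then 1 else 0) + u j s) →
      ∀ j₀ : Fin m,
        -- `u j₀ = g(x_t · u j)`: the first generator dividing `x_t · u j`
        (u j₀ ≤ fun s => (if s = t then 1 else 0) + u j s) →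
        (∀ j', j' < j₀ → ¬ (u j' ≤ fun s => (if s = t then 1 else 0) + u j s)) →
        ∀ M : Fin n,
          -- `M = max(u j)`
          u j M ≠ 0 → (∀ i : Fin n, u j i ≠ 0 → i ≤ M) →
          (fun s => u j₀ s + (if s = M then 1 else 0))
            ≤ fun s => (if s = t then 1 else 0) + u j s := by
  rintro j t ⟨i, hij, hidiv⟩ j₀ hdiv hmin₀ M hM hmax
  -- Step 1 : t ≤ M
  have ht : t ≤ M := by
    by_contra hMt
    push_neg at hMt
    have hujt : u j t = 0 := by
      by_contra h; exact absurd (hmax t h) (not_le.mpr hMt)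
    have hine : i ≠ j := Fin.ne_of_lt hij
    have hiw : ∀ s, u i s ≤ (if s = t then 1 else 0) + u j s := fun s => hidiv s
    have hit : u i t = 1 := by
      have h1 := hiw t
      rw [if_pos rfl, hujt] at h1
      have h0 : u i t ≠ 0 := by
        intro h0
        apply hmin i j hine
        refine Pi.le_def.mpr fun s => ?_
        by_cases hs : s = t
        · subst hs; rw [h0]; exact Nat.zero_le _
        · have := hiw s; rw [if_neg hs] at this; omega
      omega
    have hiub : ∀ s, t < s → u i s = 0 := by
      intro s hslt
      have hjs : u j s = 0 := by
        by_contra h; exact absurd (hmax s h) (not_le.mpr (hMt.trans hslt))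
      have := hiw s
      rw [if_neg (ne_of_gt hslt), hjs] at this
      omega
    have hjub : ∀ s, t < s → u j s = 0 := by
      intro s hslt
      by_contra h; exact absurd (hmax s h) (not_le.mpr (hMt.trans hslt))
    have hrev : RevLexLt (u j) (u i) :=
      ⟨t, by rw [hujt, hit]; omega, fun s hs => by rw [hjub s hs, hiub s hs]⟩
    have hdegi : ∑ s, u i s < ∑ s, u j s := by
      rcases horder i j hij with h | ⟨_, hrl⟩
      · exact h
      · exact absurd hrl (fun hrl => (RevLexLt.asymm hrl hrev))
    have himax : ∀ s : Fin n, u i s ≠ 0 → s ≤ t := by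
      intro s h; by_contra h'; push_neg at h'; exact h (hiub s h')
    obtain ⟨ℓ, hℓ⟩ := hstable i t (by rw [hit]; omega) himax M hMt.le
    have hℓ' : ∀ s, u ℓ s ≤ u i s + (if s = M then 1 else 0) - (if s = t then 1 else 0) :=
      fun s => hℓ s
    have htm : (M : Fin n) ≠ t := ne_of_lt hMt
    have hzle : ∀ s, s ≠ M →
        u i s + (if s = M then 1 else 0) - (if s = t then 1 else 0) ≤ u j s := by
      intro s hs
      by_cases hst : s = t
      · subst hst; rw [if_neg hs, if_pos rfl, hit]; omega
      · have := hiw s; rw [if_neg hst] at this; rw [if_neg hs, if_neg hst]; omega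
    have hsumz : ∑ s, (u i s + (if s = M then 1 else 0) - (if s = t then 1 else 0))
        = ∑ s, u i s := sum_shift (u i) M t htm (by rw [hit])
    have hℓi : ∑ s, u ℓ s ≤ ∑ s, u i s := by
      rw [← hsumz]; exact Finset.sum_le_sum (fun s _ => hℓ' s)
    have hℓM : u ℓ M ≤ u j M + 1 := by
      have h1 := hℓ' M
      have h2 := hiw M
      rw [if_pos rfl, if_neg htm] at h1
      rw [if_neg htm] at h2
      omega
    by_cases hcase : u ℓ M ≤ u j M
    · have hle : u ℓ ≤ u j := by
        intro s
        by_cases hs : s = M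
        · subst hs; exact hcase
        · exact le_trans (hℓ' s) (hzle s hs)
      rcases eq_or_ne ℓ j with rfl | hne
      · omega
      · exact hmin ℓ j hne hle
    · have hℓM1 : u ℓ M = u j M + 1 := by omega
      have hex : ∃ s, u ℓ s < u j s ∧ s ≠ M := by
        by_contra h
        push_neg at h
        have hge : ∀ s, u j s ≤ u ℓ s := by
          intro s
          by_cases hs : s = M
          · subst hs; omega
          · by_contra h'; push_neg at h'; exact hs (h s h')
        have := Finset.sum_le_sum (fun s (_ : s ∈ Finset.univ) => hge s)
        omega
      obtain ⟨s, hs1, hs2⟩ := hex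
      have hsM : s ≤ M := hmax s (by omega)
      have hℓmax : ∀ s', u ℓ s' ≠ 0 → s' ≤ M := by
        intro s' h'
        by_contra h''
        push_neg at h''
        have h4 := le_trans (hℓ' s') (hzle s' (ne_of_gt h''))
        have h5 : u j s' = 0 := by
          by_contra h3; exact absurd (hmax s' h3) (not_le.mpr h'')
        omega
      obtain ⟨p, hp⟩ := hstable ℓ M (by omega) hℓmax s hsM
      have hp' : ∀ s', u p s' ≤ u ℓ s' + (if s' = s then 1 else 0) - (if s' = M then 1 else 0) :=
        fun s' => hp s'
      have hqle : ∀ s', u ℓ s' + (if s' = s then 1 else 0) - (if s' = M then 1 else 0)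
          ≤ u j s' := by
        intro s'
        by_cases h1 : s' = M
        · subst h1; rw [if_neg (Ne.symm hs2), if_pos rfl]; omega
        · by_cases h2 : s' = s
          · subst h2; rw [if_pos rfl, if_neg hs2]; omega
          · have := le_trans (hℓ' s') (hzle s' h1); rw [if_neg h2, if_neg h1]; omega
      have hpj : u p ≤ u j := fun s' => le_trans (hp' s') (hqle s')
      rcases eq_or_ne p j with rfl | hne
      · have h1 := Finset.sum_le_sum (fun s' (_ : s' ∈ Finset.univ) => hp' s')
        rw [sum_shift (u ℓ) s M hs2 (by omega)] at h1
        omega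
      · exact hmin p j hne hpj
  -- Step 2 : the key inequality at coordinate M
  have hdiv' : ∀ s, u j₀ s ≤ (if s = t then 1 else 0) + u j s := fun s => hdiv s
  have hkey : u j₀ M + 1 ≤ (if M = t then 1 else 0) + u j M := by
    by_contra hc
    push_neg at hc
    have hdivM := hdiv' M
    have hzw : ∀ s, M < s → (if s = t then 1 else 0) + u j s = 0 := by
      intro s hs
      have h1 : u j s = 0 := by
        by_contra h; exact absurd (hmax s h) (not_le.mpr hs)
      have h2 : s ≠ t := by
        intro h; subst h; exact absurd ht (not_le.mpr hs)
      rw [if_neg h2, h1]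
    have hne : ∃ s, u j₀ s < (if s = t then 1 else 0) + u j s := by
      by_contra h
      push_neg at h
      have hjj : u j ≤ u j₀ := by
        refine Pi.le_def.mpr fun s => ?_
        have := h s
        by_cases hst : s = t
        · rw [if_pos hst] at this; omega
        · rw [if_neg hst] at this; omega
      have hjeq : j = j₀ := by
        by_contra hne'; exact hmin j j₀ hne' hjj
      subst hjeq
      have := h t
      rw [if_pos rfl] at this
      omega
    obtain ⟨s, hslt⟩ := hne
    have hsM : s ≠ M := by intro h; subst h; omega
    have hsMle : s ≤ M := by
      by_contra h; push_neg at h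
      rw [hzw s h] at hslt; omega
    have hj₀max : ∀ s', u j₀ s' ≠ 0 → s' ≤ M := by
      intro s' h'
      by_contra h''; push_neg at h''
      have := hdiv' s'; rw [hzw s' h''] at this; omega
    have hj₀M : u j₀ M ≠ 0 := by
      by_cases h : M = t
      · rw [if_pos h] at hc; omega
      · rw [if_neg h] at hc; omega
    obtain ⟨q, hq⟩ := hstable j₀ M hj₀M hj₀max s hsMle
    have hq' : ∀ s', u q s' ≤ u j₀ s' + (if s' = s then 1 else 0) - (if s' = M then 1 else 0) :=
      fun s' => hq s'
    have hqw : ∀ s', u q s' ≤ (if s' = t then 1 else 0) + u j s' := by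
      intro s'
      by_cases h1 : s' = M
      · subst h1
        have h3 := hq' s'
        rw [if_neg (Ne.symm hsM), if_pos rfl] at h3
        omega
      · by_cases h2 : s' = s
        · have h3 := hq' s'
          rw [if_pos h2, if_neg h1] at h3
          rw [h2] at h3 ⊢
          have h4 := hslt
          omega
        · have h3 := hq' s'; rw [if_neg h2, if_neg h1] at h3
          exact le_trans (by omega) (hdiv' s')
    have hqM : u q M < u j₀ M := by
      have := hq' M; rw [if_neg (Ne.symm hsM), if_pos rfl] at this
      omega
    have hj₀q : j₀ < q := by
      have h1 : ¬ q < j₀ := fun h => hmin₀ q h hqw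
      rcases eq_or_ne q j₀ with rfl | h2
      · omega
      · exact lt_of_le_of_ne (not_lt.mp h1) (Ne.symm h2)
    have hdq : ∑ s', u q s' ≤ ∑ s', u j₀ s' := by
      have h1 := Finset.sum_le_sum (fun s' (_ : s' ∈ Finset.univ) => hq' s')
      rwa [sum_shift (u j₀) s M hsM (by omega)] at h1
    have hrev2 : RevLexLt (u q) (u j₀) := by
      refine ⟨M, hqM, fun s' hs' => ?_⟩
      have h1 : u q s' = 0 := by
        have := hqw s'; rw [hzw s' hs'] at this; omega
      have h2 : u j₀ s' = 0 := by
        have := hdiv' s'; rw [hzw s' hs'] at this; omega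
      rw [h1, h2]
    rcases horder j₀ q hj₀q with h | ⟨_, h⟩
    · omega
    · exact RevLexLt.asymm h hrev2
  -- Step 3 : conclude
  refine Pi.le_def.mpr fun s => ?_
  by_cases hs : s = M
  · subst hs
    rw [if_pos rfl]
    exact hkey
  · rw [if_neg hs]
    have := hdiv' s
    omega
end

section
/- Let I = (x_1x_3, x_1x_4, x_2x_3, x_2x_4, x_5^2) ⊆ k[x_1,…,x_5] and R = S/I. The cycle z = \overline{x_2x_5} e_1∧e_3∧e_4∧e_5 − \overline{x_1x_5} e_2∧e_3∧e_4∧e_5 in the Koszul complex K^R is not a boundary. -/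
/-!
`z` is a cycle because every term of `∂z` lies in `(x₁, x₂)(x₃, x₄) + (x₅²)` except the pair
`x₁·x₂x₅ − x₂·x₁x₅`, which cancels. If `z = ∂w`, only the component `c` of `w` on `e₁∧…∧e₅`
reaches degree 4, and the coefficients of `e₂∧e₃∧e₄∧e₅` and `e₁∧e₂∧e₃∧e₅` give `x₁(c + x₅) ∈ I`
and `x₄c ∈ I` for a lift `c ∈ S`. As `I` is a monomial ideal containing neither `x₁x₅` nor
`x₄x₅`, the coefficient of `x₅` in `c` would have to be both `−1` and `0`.
-/

open MvPolynomial

section Koszul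

variable {R : Type*} [CommRing R]

theorem koszulBd_univ_erase {n : ℕ} (x : Fin n → R) (w : Finset (Fin n) → R) (j : Fin n) :
    koszulBd x w (Finset.univ.erase j) = koszulSgn Finset.univ j • (x j * w Finset.univ) := by
  rw [koszulBd, Finset.compl_erase, Finset.compl_univ, insert_empty_eq, Finset.sum_singleton,
    Finset.insert_erase (Finset.mem_univ j)]

/-- The paper's `z`, with `x_{i+1}` and `e_{i+1}` shifted to the index `i`. -/
def cycleZ (x : Fin 5 → R) (τ : Finset (Fin 5)) : R :=
  if τ = {0, 2, 3, 4} then x 1 * x 4 else if τ = {1, 2, 3, 4} then -(x 0 * x 4) else 0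

theorem koszulBd_cycleZ (x : Fin 5 → R) (h02 : x 0 * x 2 = 0) (h03 : x 0 * x 3 = 0)
    (h12 : x 1 * x 2 = 0) (h13 : x 1 * x 3 = 0) (h44 : x 4 ^ 2 = 0) :
    koszulBd x (cycleZ x) = 0 := by
  funext σ
  rw [koszulBd, ← Finset.univ_inter σᶜ, ← Finset.sum_ite_mem, Fin.sum_univ_five]
  fin_cases σ <;> simp +decide [cycleZ, koszulSgn] <;> grind

theorem mul_top_of_koszulBd_eq_cycleZ {x : Fin 5 → R} {w : Finset (Fin 5) → R}
    (hw : koszulBd x w = cycleZ x) :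
    x 0 * w Finset.univ = -(x 0 * x 4) ∧ x 3 * w Finset.univ = 0 := by
  have h0 := congrFun hw (Finset.univ.erase 0)
  have h3 := congrFun hw (Finset.univ.erase 3)
  rw [koszulBd_univ_erase, show koszulSgn Finset.univ (0 : Fin 5) = 1 by decide, one_smul] at h0
  rw [koszulBd_univ_erase, show koszulSgn Finset.univ (3 : Fin 5) = -1 by decide,
    neg_one_smul] at h3
  exact ⟨h0.trans (by simp +decide [cycleZ]), neg_eq_zero.mp (h3.trans (by simp +decide [cycleZ]))⟩

end Koszul

theorem MvPolynomial.coeff_eq_zero_of_mem_span_monomial {σ R : Type*} [CommSemiring R]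
    {s : Set (σ →₀ ℕ)} {f : MvPolynomial σ R}
    (hf : f ∈ Ideal.span ((fun m => monomial m (1 : R)) '' s)) {d : σ →₀ ℕ}
    (hd : ∀ m ∈ s, ¬ m ≤ d) : coeff d f = 0 := by
  by_contra h
  obtain ⟨m, hm, hmd⟩ := mem_ideal_span_monomial_image.mp hf d (mem_support_iff.mpr h)
  exact hd m hm hmd

section StandardMonomials

open Finsupp (single)

variable {k : Type*} [CommRing k]

abbrev genExponents : Set (Fin 5 →₀ ℕ) :=
  {single 0 1 + single 2 1, single 0 1 + single 3 1, single 1 1 + single 2 1,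
    single 1 1 + single 3 1, single 4 2}

theorem span_eq_span_monomial_genExponents :
    (Ideal.span {X 0 * X 2, X 0 * X 3, X 1 * X 2, X 1 * X 3, X 4 ^ 2} :
      Ideal (MvPolynomial (Fin 5) k)) =
    Ideal.span ((fun m => monomial m (1 : k)) '' genExponents) := by
  simp [Set.image_insert_eq, X, monomial_mul, monomial_pow]

/-- `X 0 * X 4` and `X 3 * X 4` are divisible by no generator, but their coefficients in
`X 0 * (p + X 4)` and `X 3 * p` are `coeff (X 4) p + 1` and `coeff (X 4) p`. -/
theorem not_exists_mul_add_X_mem [Nontrivial k] :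
    ¬ ∃ p : MvPolynomial (Fin 5) k,
      X 0 * (p + X 4) ∈ Ideal.span ((fun m => monomial m (1 : k)) '' genExponents) ∧
      X 3 * p ∈ Ideal.span ((fun m => monomial m (1 : k)) '' genExponents) := by
  rintro ⟨p, h0, h3⟩
  have standard :
      ∀ i ∈ ({0, 3} : Finset (Fin 5)), ∀ m ∈ genExponents, ¬ m ≤ single i 1 + single 4 1 := by
    simp only [Finset.mem_insert, Finset.mem_singleton, Set.mem_insert_iff, Set.mem_singleton_iff,
      Finsupp.le_def, Finsupp.add_apply, Finsupp.single_apply, not_forall, forall_eq_or_imp,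
      forall_eq]
    decide
  have c0 := coeff_eq_zero_of_mem_span_monomial h0 (standard 0 (by simp))
  have c3 := coeff_eq_zero_of_mem_span_monomial h3 (standard 3 (by simp))
  rw [coeff_X_mul] at c0 c3
  rw [coeff_add, c3, coeff_X, if_pos rfl, zero_add] at c0
  exact one_ne_zero c0

end StandardMonomials

/-- for `I = (x₁x₃, x₁x₄, x₂x₃, x₂x₄, x₅²)` (0-indexed:
`(X₀X₂, X₀X₃, X₁X₂, X₁X₃, X₄²)`), the cycle
`z = \overline{x₂x₅} e₁∧e₃∧e₄∧e₅ − \overline{x₁x₅} e₂∧e₃∧e₄∧e₅`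
(coefficient `X₁X₄` at `{0,2,3,4}` and `−X₀X₄` at `{1,2,3,4}`) in the Koszul
complex of `S/I` is a cycle and is not a boundary. -/
theorem stmt18 (k : Type*) [Field k]
    (I : Ideal (MvPolynomial (Fin 5) k))
    (hI : I = Ideal.span {X 0 * X 2, X 0 * X 3, X 1 * X 2, X 1 * X 3, X 4 ^ 2}) :
    (koszulBd (fun i => Ideal.Quotient.mk I (X i))
        (fun τ => if τ = ({0, 2, 3, 4} : Finset (Fin 5))
          then Ideal.Quotient.mk I (X 1 * X 4)
          else if τ = ({1, 2, 3, 4} : Finset (Fin 5))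
            then - Ideal.Quotient.mk I (X 0 * X 4) else 0) = 0)
    ∧ ¬ ∃ w : Finset (Fin 5) → (MvPolynomial (Fin 5) k ⧸ I),
        koszulBd (fun i => Ideal.Quotient.mk I (X i)) w
          = fun τ => if τ = ({0, 2, 3, 4} : Finset (Fin 5))
              then Ideal.Quotient.mk I (X 1 * X 4)
              else if τ = ({1, 2, 3, 4} : Finset (Fin 5))
                then - Ideal.Quotient.mk I (X 0 * X 4) else 0 := by
  simp only [map_mul]
  change koszulBd _ (cycleZ fun i => Ideal.Quotient.mk I (X i)) = 0 ∧
    ¬ ∃ w, koszulBd _ w = cycleZ fun i => Ideal.Quotient.mk I (X i)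
  have rel : ∀ f ∈ ({X 0 * X 2, X 0 * X 3, X 1 * X 2, X 1 * X 3, X 4 ^ 2} :
      Set (MvPolynomial (Fin 5) k)), Ideal.Quotient.mk I f = 0 := fun f hf =>
    Ideal.Quotient.eq_zero_iff_mem.mpr (hI ▸ Ideal.subset_span hf)
  refine ⟨koszulBd_cycleZ _ ?_ ?_ ?_ ?_ ?_, ?_⟩
  iterate 4 exact (map_mul _ _ _).symm.trans (rel _ (by simp))
  · exact (map_pow _ _ _).symm.trans (rel _ (by simp))
  rintro ⟨w, hw⟩
  obtain ⟨p, hp⟩ := Ideal.Quotient.mk_surjective (w Finset.univ)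
  obtain ⟨h0, h3⟩ := mul_top_of_koszulBd_eq_cycleZ hw
  refine not_exists_mul_add_X_mem ⟨p, ?_, ?_⟩ <;>
    rw [← span_eq_span_monomial_genExponents, ← hI, ← Ideal.Quotient.eq_zero_iff_mem, map_mul]
  · rw [map_add, hp]
    linear_combination h0
  · rwa [hp]
end
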